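/- arXiv:2101.02042 — 8 statements merged into one kernel-verified Lean document; each statement's English description precedes it below -/
import Mathlib

section
/- Let X be a connected, locally finite simple graph with vertex set V and graph distance d that is quasi-isometric to ℤ, i.e., there exist real constants α ≥ 1, β ≥ 0, γ ≥ 0 and a map f : V → ℤ such that (i) α⁻¹·d(u,v) − β ≤ |f(u) − f(v)| ≤ α·d(u,v) + β for all u, v ∈ V, and (ii) for every n ∈ ℤ there exists x ∈ V with |f(x) − n| ≤ γ. Then there exists a bi-infinite geodesic in X, i.e., a map ℓ : ℤ → V with d(ℓ(i), ℓ(j)) = |i − j| for all i, j ∈ ℤ. -/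
open SimpleGraph

lemma getVert_dist_le {V : Type*} {X : SimpleGraph V} (hconn : X.Connected)
    {u v : V} (p : X.Walk u v) (i k : ℕ) :
    X.dist (p.getVert i) (p.getVert (i + k)) ≤ k := by
  induction k with
  | zero => simp [SimpleGraph.dist_self]
  | succ k ih =>
    have h1 : X.dist (p.getVert (i+k)) (p.getVert (i+k+1)) ≤ 1 := by
      by_cases h : i + k < p.length
      · exact le_of_eq (SimpleGraph.dist_eq_one_iff_adj.mpr (p.adj_getVert_succ h))
      · rw [p.getVert_of_length_le (le_of_not_gt h), p.getVert_of_length_le (by omega)]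
        simp [SimpleGraph.dist_self]
    show X.dist (p.getVert i) (p.getVert (i+k+1)) ≤ k + 1
    have := hconn.dist_triangle (u := p.getVert i) (v := p.getVert (i+k)) (w := p.getVert (i+k+1))
    omega

lemma getVert_dist_eq {V : Type*} {X : SimpleGraph V} (hconn : X.Connected)
    {u v : V} (p : X.Walk u v) (hp : p.length = X.dist u v)
    {i j : ℕ} (hij : i ≤ j) (hj : j ≤ p.length) :
    X.dist (p.getVert i) (p.getVert j) = j - i := by
  have h1 : X.dist (p.getVert i) (p.getVert j) ≤ j - i := by
    have := getVert_dist_le hconn p i (j - i)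
    rwa [Nat.add_sub_cancel' hij] at this
  have h2 : X.dist u (p.getVert i) ≤ i := by
    have := getVert_dist_le hconn p 0 i
    rwa [Nat.zero_add, p.getVert_zero] at this
  have h3 : X.dist (p.getVert j) v ≤ p.length - j := by
    have := getVert_dist_le hconn p j (p.length - j)
    rwa [Nat.add_sub_cancel' hj, p.getVert_length] at this
  have h4 := hconn.dist_triangle (u := u) (v := p.getVert i) (w := p.getVert j)
  have h5 := hconn.dist_triangle (u := u) (v := p.getVert j) (w := v)
  omega

lemma ball_finite {V : Type*} {X : SimpleGraph V} (hconn : X.Connected)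
    (hlf : ∀ v : V, (X.neighborSet v).Finite) (v0 : V) (n : ℕ) :
    {v : V | X.dist v0 v ≤ n}.Finite := by
  induction n with
  | zero =>
    refine Set.Finite.subset (Set.finite_singleton v0) ?_
    intro v hv
    simp only [Set.mem_setOf_eq, Nat.le_zero] at hv
    simp [((hconn.dist_eq_zero_iff).mp hv).symm]
  | succ n ih =>
    have hsub : {v : V | X.dist v0 v ≤ n + 1} ⊆
        {v | X.dist v0 v ≤ n} ∪ ⋃ w ∈ {v | X.dist v0 v ≤ n}, X.neighborSet w := by
      intro v hv
      simp only [Set.mem_setOf_eq] at hv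
      rcases Nat.lt_or_ge (X.dist v0 v) (n+1) with h | h
      · exact Or.inl (by simpa using Nat.lt_succ_iff.mp h)
      · have hd : X.dist v0 v = n + 1 := le_antisymm hv h
        obtain ⟨p, hplen⟩ := hconn.exists_walk_length_eq_dist v0 v
        right
        have hlen : p.length = n + 1 := by rw [hplen, hd]
        have hw : X.dist v0 (p.getVert n) ≤ n := by
          have := getVert_dist_eq hconn p hplen (Nat.zero_le n) (by omega)
          rw [p.getVert_zero] at this
          omega
        have hadj : X.Adj (p.getVert n) v := by
          have hadj := p.adj_getVert_succ (i := n) (by omega)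
          rwa [show n + 1 = p.length by omega, p.getVert_length] at hadj
        exact Set.mem_biUnion hw hadj
    exact ((ih.union (ih.biUnion (fun w _ => hlf w)))).subset hsub

lemma ultrafilter_pigeonhole {ι W : Type*} (U : Ultrafilter ι) (g : ι → W) {s : Set W}
    (hs : s.Finite) (hmem : {n | g n ∈ s} ∈ U) : ∃ a, {n | g n = a} ∈ U := by
  have hmap : s ∈ U.map g := by rwa [Ultrafilter.mem_map]
  obtain ⟨a, -, ha⟩ := Ultrafilter.eq_pure_of_finite_mem hs hmap
  refine ⟨a, ?_⟩
  have : {a} ∈ U.map g := by rw [ha]; exact Filter.mem_pure.mpr rfl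
  rw [Ultrafilter.mem_map] at this
  exact Filter.mem_of_superset this (by intro n hn; simpa using hn)
/-- A connected, locally finite simple graph that is quasi-isometric to ℤ
contains a bi-infinite geodesic. -/
theorem exists_biinfinite_geodesic_of_qi_to_int {V : Type*} (X : SimpleGraph V)
    (hconn : X.Connected) (hlf : ∀ v : V, (X.neighborSet v).Finite)
    (α β γ : ℝ) (hα : 1 ≤ α) (hβ : 0 ≤ β) (hγ : 0 ≤ γ) (f : V → ℤ)
    (hf1 : ∀ u v : V, α⁻¹ * (X.dist u v : ℝ) - β ≤ (|f u - f v| : ℝ) ∧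
        (|f u - f v| : ℝ) ≤ α * (X.dist u v : ℝ) + β)
    (hf2 : ∀ n : ℤ, ∃ x : V, (|f x - n| : ℝ) ≤ γ) :
    ∃ ℓ : ℤ → V, ∀ i j : ℤ, (X.dist (ℓ i) (ℓ j) : ℤ) = |i - j| := by
  classical
  have hα0 : (0:ℝ) < α := lt_of_lt_of_le one_pos hα
  -- base point
  obtain ⟨v0, hv0⟩ := hf2 0
  -- target sequence: c n = n + ⌈γ⌉ + 1
  set c : ℕ → ℤ := fun n => (n : ℤ) + (⌈γ⌉₊ : ℤ) + 1 with hc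
  choose a ha using fun n => hf2 (-(c n))
  choose b hb using fun n => hf2 (c n)
  -- integer bounds on f at endpoints
  have hfa : ∀ n : ℕ, f (a n) ≤ -((n:ℤ)+1) := by
    intro n
    have h1 : |f (a n) - -(c n)| ≤ (⌈γ⌉₊ : ℤ) := by
      exact_mod_cast le_trans (ha n) (Nat.le_ceil γ)
    rw [abs_le] at h1
    simp only [hc] at h1
    omega
  have hfb : ∀ n : ℕ, ((n:ℤ)+1) ≤ f (b n) := by
    intro n
    have h1 : |f (b n) - c n| ≤ (⌈γ⌉₊ : ℤ) := by
      exact_mod_cast le_trans (hb n) (Nat.le_ceil γ)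
    rw [abs_le] at h1
    simp only [hc] at h1
    omega
  -- geodesic walks
  choose p hp using fun n => hconn.exists_walk_length_eq_dist (a n) (b n)
  -- first index where f becomes nonnegative
  have hex : ∀ n : ℕ, ∃ k, 0 ≤ f ((p n).getVert k) := by
    intro n
    exact ⟨(p n).length, by rw [(p n).getVert_length]; have := hfb n; omega⟩
  set m : ℕ → ℕ := fun n => Nat.find (hex n) with hm
  have hm0 : ∀ n, 0 ≤ f ((p n).getVert (m n)) := fun n => Nat.find_spec (hex n)
  have hmle : ∀ n, m n ≤ (p n).length := by
    intro n
    exact Nat.find_le (by rw [(p n).getVert_length]; have := hfb n; omega)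
  have hm1 : ∀ n, 1 ≤ m n := by
    intro n
    rcases Nat.eq_zero_or_pos (m n) with h | h
    · exfalso
      have := hm0 n
      rw [h, (p n).getVert_zero] at this
      have := hfa n; omega
    · exact h
  have hprev : ∀ n, f ((p n).getVert (m n - 1)) < 0 := by
    intro n
    have := Nat.find_min (hex n) (show m n - 1 < m n by have := hm1 n; omega)
    omega
  -- |f(w n)| ≤ α + β where w n = getVert (m n)
  have hfw : ∀ n : ℕ, (f ((p n).getVert (m n)) : ℝ) ≤ α + β := by
    intro n
    have hd1 : X.dist ((p n).getVert (m n - 1)) ((p n).getVert (m n)) ≤ 1 := by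
      have := getVert_dist_le hconn (p n) (m n - 1) 1
      rwa [show m n - 1 + 1 = m n by have := hm1 n; omega] at this
    have h2 := (hf1 ((p n).getVert (m n - 1)) ((p n).getVert (m n))).2
    have hdr : (X.dist ((p n).getVert (m n - 1)) ((p n).getVert (m n)) : ℝ) ≤ 1 := by
      exact_mod_cast hd1
    have h3 : (|f ((p n).getVert (m n - 1)) - f ((p n).getVert (m n))| : ℝ) ≤ α + β := by
      nlinarith
    have h4 : (f ((p n).getVert (m n)) : ℤ) ≤
        |f ((p n).getVert (m n - 1)) - f ((p n).getVert (m n))| := by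
      have := hprev n
      rcases abs_cases (f ((p n).getVert (m n - 1)) - f ((p n).getVert (m n))) with
        ⟨he, _⟩ | ⟨he, _⟩ <;> omega
    have h4' : (f ((p n).getVert (m n)) : ℝ) ≤
        |(f ((p n).getVert (m n - 1)) : ℝ) - (f ((p n).getVert (m n)) : ℝ)| := by
      exact_mod_cast h4
    linarith
  -- distance from basepoint to w n is bounded by R
  set R : ℕ := ⌈α * (γ + (α + β) + β)⌉₊ with hR
  have hwball : ∀ n : ℕ, X.dist v0 ((p n).getVert (m n)) ≤ R := by
    intro n
    have h1 := (hf1 v0 ((p n).getVert (m n))).1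
    have hv0' : (|f v0| : ℝ) ≤ γ := by
      have := hv0
      simpa using this
    have habs : (|f v0 - f ((p n).getVert (m n))| : ℝ) ≤ γ + (α + β) := by
      have h2 := abs_sub (f v0 : ℝ) (f ((p n).getVert (m n)) : ℝ)
      have h3 : |(f ((p n).getVert (m n)) : ℝ)| ≤ α + β := by
        rw [abs_of_nonneg (by exact_mod_cast hm0 n : (0:ℝ) ≤ _)]
        exact hfw n
      linarith
    have hdr : (X.dist v0 ((p n).getVert (m n)) : ℝ) ≤ α * (γ + (α + β) + β) := by
      have hinv : α⁻¹ * (X.dist v0 ((p n).getVert (m n)) : ℝ) ≤ γ + (α + β) + β := by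
        linarith
      have := mul_le_mul_of_nonneg_left hinv hα0.le
      rw [← mul_assoc, mul_inv_cancel₀ hα0.ne', one_mul] at this
      exact this
    have : (X.dist v0 ((p n).getVert (m n)) : ℝ) ≤ (R : ℝ) :=
      le_trans hdr (Nat.le_ceil _)
    exact_mod_cast this
  -- growth of both sides
  have hgrow : ∀ (T n : ℕ), α * T + α + 2 * β ≤ (n : ℝ) →
      T ≤ m n ∧ T ≤ (p n).length - m n := by
    intro T n hn
    constructor
    · -- dist (a n) (w n) = m n
      have hd : X.dist (a n) ((p n).getVert (m n)) = m n := by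
        have := getVert_dist_eq hconn (p n) (hp n) (Nat.zero_le (m n)) (hmle n)
        rwa [(p n).getVert_zero, Nat.sub_zero] at this
      have h2 := (hf1 (a n) ((p n).getVert (m n))).2
      rw [hd] at h2
      have hlow : ((n:ℝ) + 1) ≤ (|f (a n) - f ((p n).getVert (m n))| : ℝ) := by
        have h3 : ((n:ℤ) + 1) ≤ |f (a n) - f ((p n).getVert (m n))| := by
          have := hfa n; have := hm0 n
          rcases abs_cases (f (a n) - f ((p n).getVert (m n))) with ⟨he, _⟩ | ⟨he, _⟩ <;> omega
        exact_mod_cast h3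
      have : (T : ℝ) ≤ (m n : ℝ) := by
        have hmul : α * T ≤ α * (m n : ℝ) := by nlinarith
        exact le_of_mul_le_mul_left hmul hα0
      exact_mod_cast this
    · have hd : X.dist ((p n).getVert (m n)) (b n) = (p n).length - m n := by
        have := getVert_dist_eq hconn (p n) (hp n) (hmle n) (le_refl (p n).length)
        rwa [(p n).getVert_length] at this
      have h2 := (hf1 ((p n).getVert (m n)) (b n)).2
      rw [hd] at h2
      have hlow : ((n:ℝ) + 1) - (α + β) ≤ (|f ((p n).getVert (m n)) - f (b n)| : ℝ) := by
        have h4 : (f (b n) : ℝ) - (f ((p n).getVert (m n)) : ℝ)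
            ≤ (|f ((p n).getVert (m n)) - f (b n)| : ℝ) := by
          have := neg_le_abs ((f ((p n).getVert (m n)) : ℝ) - (f (b n) : ℝ))
          linarith
        have h5 : ((n:ℝ) + 1) ≤ (f (b n) : ℝ) := by exact_mod_cast hfb n
        have h6 := hfw n
        linarith
      have : (T : ℝ) ≤ (((p n).length - m n : ℕ) : ℝ) := by
        have hmul : α * T ≤ α * (((p n).length - m n : ℕ) : ℝ) := by nlinarith
        exact le_of_mul_le_mul_left hmul hα0
      exact_mod_cast this
  -- the shifted parametrization
  set g : ℕ → ℤ → V := fun n i => (p n).getVert ((m n : ℤ) + i).toNat with hg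
  have hgeo : ∀ (n : ℕ) (i j : ℤ), 0 ≤ (m n : ℤ) + i → (m n : ℤ) + i ≤ (p n).length →
      0 ≤ (m n : ℤ) + j → (m n : ℤ) + j ≤ (p n).length →
      (X.dist (g n i) (g n j) : ℤ) = |i - j| := by
    intro n i j hi0 hil hj0 hjl
    rcases le_total i j with hij | hij
    · have hk : ((m n : ℤ) + i).toNat ≤ ((m n : ℤ) + j).toNat := by omega
      have hkl : ((m n : ℤ) + j).toNat ≤ (p n).length := by omega
      have := getVert_dist_eq hconn (p n) (hp n) hk hkl
      show (X.dist ((p n).getVert ((m n : ℤ) + i).toNat)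
          ((p n).getVert ((m n : ℤ) + j).toNat) : ℤ) = |i - j|
      rw [abs_of_nonpos (by omega)]
      omega
    · have hk : ((m n : ℤ) + j).toNat ≤ ((m n : ℤ) + i).toNat := by omega
      have hkl : ((m n : ℤ) + i).toNat ≤ (p n).length := by omega
      have := getVert_dist_eq hconn (p n) (hp n) hk hkl
      show (X.dist ((p n).getVert ((m n : ℤ) + i).toNat)
          ((p n).getVert ((m n : ℤ) + j).toNat) : ℤ) = |i - j|
      rw [SimpleGraph.dist_comm, abs_of_nonneg (by omega)]
      omega
  have hg0 : ∀ n, g n 0 = (p n).getVert (m n) := by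
    intro n
    show (p n).getVert ((m n : ℤ) + 0).toNat = (p n).getVert (m n)
    norm_num
  -- the ultrafilter
  set U : Ultrafilter ℕ := Ultrafilter.of Filter.cofinite with hU
  have hUco : (U : Filter ℕ) ≤ Filter.cofinite := Ultrafilter.of_le _
  have hUat : ∀ N : ℕ, {n : ℕ | N ≤ n} ∈ U := by
    intro N
    have hmem : {n : ℕ | N ≤ n} ∈ (Filter.cofinite : Filter ℕ) := by
      rw [Nat.cofinite_eq_atTop]
      exact Filter.mem_atTop N
    exact hUco hmem
  -- for each i, eventually the index is in range
  set S : ℤ → Set ℕ := fun i =>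
    {n : ℕ | 0 ≤ (m n : ℤ) + i ∧ (m n : ℤ) + i ≤ (p n).length} with hS
  have hSU : ∀ i : ℤ, S i ∈ U := by
    intro i
    refine Filter.mem_of_superset (hUat ⌈α * (i.natAbs : ℝ) + α + 2 * β⌉₊) ?_
    intro n hn
    have hcond : α * (i.natAbs : ℝ) + α + 2 * β ≤ (n : ℝ) := by
      calc α * (i.natAbs : ℝ) + α + 2 * β ≤ (⌈α * (i.natAbs : ℝ) + α + 2 * β⌉₊ : ℝ) :=
            Nat.le_ceil _
        _ ≤ (n : ℝ) := by exact_mod_cast hn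
    obtain ⟨h1, h2⟩ := hgrow i.natAbs n hcond
    have h3 := hmle n
    constructor <;> omega
  -- values stay in a finite ball
  have hball : ∀ i : ℤ, ∀ n ∈ S i, X.dist v0 (g n i) ≤ R + i.natAbs := by
    intro i n hn
    obtain ⟨h1, h2⟩ := hn
    have htri := hconn.dist_triangle (u := v0) (v := (p n).getVert (m n)) (w := g n i)
    have hdw : (X.dist (g n 0) (g n i) : ℤ) = |0 - i| := by
      refine hgeo n 0 i (by omega) ?_ h1 h2
      have := hmle n; omega
    rw [hg0 n, zero_sub, abs_neg, Int.abs_eq_natAbs] at hdw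
    have hdw' : X.dist ((p n).getVert (m n)) (g n i) = i.natAbs := by omega
    have := hwball n
    omega
  -- take the ultrafilter limit
  have hlim : ∀ i : ℤ, ∃ x : V, {n : ℕ | g n i = x} ∈ U := by
    intro i
    refine ultrafilter_pigeonhole U (fun n => g n i)
      (ball_finite hconn hlf v0 (R + i.natAbs)) ?_
    exact Filter.mem_of_superset (hSU i) (fun n hn => hball i n hn)
  choose ℓ hℓ using hlim
  refine ⟨ℓ, ?_⟩
  intro i j
  have hmem : ({n : ℕ | g n i = ℓ i} ∩ {n : ℕ | g n j = ℓ j} ∩ (S i ∩ S j)) ∈ U :=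
    Filter.inter_mem (Filter.inter_mem (hℓ i) (hℓ j)) (Filter.inter_mem (hSU i) (hSU j))
  obtain ⟨n, ⟨⟨hni, hnj⟩, ⟨hSi1, hSi2⟩, ⟨hSj1, hSj2⟩⟩⟩ := Ultrafilter.nonempty_of_mem hmem
  rw [← hni, ← hnj]
  exact hgeo n i j hSi1 hSi2 hSj1 hSj2
end

section
/- Let X be a connected, locally finite simple graph with vertex set V and graph distance d, and suppose there exist real constants α ≥ 1, β ≥ 0, γ ≥ 0 and a map f : V → ℤ with (i) α⁻¹·d(u,v) − β ≤ |f(u) − f(v)| ≤ α·d(u,v) + β for all u, v ∈ V, and (ii) for every n ∈ ℤ there exists x ∈ V with |f(x) − n| ≤ γ. Then for every bi-infinite geodesic ℓ : ℤ → V and every vertex x ∈ V there exists i ∈ ℤ with d(x, ℓ(i)) ≤ α² + 2αβ. In particular, every vertex of X lies within distance α² + 2αβ of any bi-infinite geodesic. -/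
/-!
Along the geodesic, `g = f ∘ ℓ : ℤ → ℤ` is an `(α, β)`-quasi-isometric embedding, so its steps are
at most `α + β`. A quasi-isometric embedding `ℤ → ℤ` is unbounded in both directions: if it were
bounded below, both rays `i ≥ 0` and `i ≤ 0` would climb past a high level `c`, and the discrete
intermediate value theorem would give points on opposite rays, both far from `0`, whose images
are within `2(α + β)` of `c`, hence of each other, which the lower quasi-isometry bound forbids.
Hence `g` comes within `α + β` of every integer, in particular of `f x`, and the lower bound for
`f` turns `|f x - f (ℓ k)| ≤ α + β` into `d(x, ℓ k) ≤ α (α + 2β)`.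
-/

lemma le_mul_add_of_inv_mul_sub_le {α β d e : ℝ} (hα : 0 < α) (h : α⁻¹ * d - β ≤ e) :
    d ≤ α * (e + β) := by
  rwa [sub_le_iff_le_add, inv_mul_le_iff₀ hα] at h

lemma exists_mem_Icc_dist_le_of_le_of_le {h : ℤ → ℤ} {s : ℝ}
    (hstep : ∀ i, dist (h (i + 1)) (h i) ≤ s) {a b t : ℤ} (hab : a ≤ b) (ha : h a ≤ t)
    (hb : t ≤ h b) : ∃ k ∈ Set.Icc a b, dist (h k) t ≤ s := by
  induction b, hab using Int.leInduction with
  | base =>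
    obtain rfl := le_antisymm hb ha
    exact ⟨a, Set.left_mem_Icc.2 le_rfl, by rw [dist_self]; exact dist_nonneg.trans (hstep a)⟩
  | succ b hab ih =>
    by_cases hbt : t ≤ h b
    · obtain ⟨k, ⟨hak, hkb⟩, hk⟩ := ih hbt
      exact ⟨k, ⟨hak, by omega⟩, hk⟩
    · refine ⟨b + 1, ⟨by omega, le_rfl⟩, le_trans ?_ (hstep b)⟩
      rw [Int.dist_eq', Int.dist_eq']
      exact_mod_cast abs_le_abs (by omega) (by omega)

lemma exists_mem_Icc_dist_le_of_mem_uIcc {h : ℤ → ℤ} {s : ℝ}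
    (hstep : ∀ i, dist (h (i + 1)) (h i) ≤ s) {a b t : ℤ} (hab : a ≤ b)
    (ht : t ∈ Set.uIcc (h a) (h b)) : ∃ k ∈ Set.Icc a b, dist (h k) t ≤ s := by
  rcases Set.mem_uIcc.1 ht with ⟨ha, hb⟩ | ⟨hb, ha⟩
  · exact exists_mem_Icc_dist_le_of_le_of_le hstep hab ha hb
  · have hstep' : ∀ i, dist ((-h) (i + 1)) ((-h) i) ≤ s := fun i => by
      simpa only [Pi.neg_apply, dist_neg_neg] using hstep i
    obtain ⟨k, hk, hkt⟩ := exists_mem_Icc_dist_le_of_le_of_le hstep' hab (neg_le_neg ha)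
      (neg_le_neg hb)
    exact ⟨k, hk, by simpa only [Pi.neg_apply, dist_neg_neg] using hkt⟩

def IsQuasiIsometricEmbedding {X Y : Type*} [PseudoMetricSpace X] [PseudoMetricSpace Y]
    (α β : ℝ) (h : X → Y) : Prop :=
  ∀ x y, α⁻¹ * dist x y - β ≤ dist (h x) (h y) ∧ dist (h x) (h y) ≤ α * dist x y + β

namespace IsQuasiIsometricEmbedding

variable {X : Type*} [PseudoMetricSpace X] {α β : ℝ}

lemma dist_le {Y : Type*} [PseudoMetricSpace Y] {h : X → Y}
    (hh : IsQuasiIsometricEmbedding α β h) (hα : 0 < α) (x y : X) :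
    dist x y ≤ α * (dist (h x) (h y) + β) :=
  le_mul_add_of_inv_mul_sub_le hα (hh x y).1

lemma neg {h : X → ℤ} (hh : IsQuasiIsometricEmbedding α β h) :
    IsQuasiIsometricEmbedding α β (-h) := fun x y => by
  simpa only [Pi.neg_apply, dist_neg_neg] using hh x y

lemma dist_succ_le {Y : Type*} [PseudoMetricSpace Y] {h : ℤ → Y}
    (hh : IsQuasiIsometricEmbedding α β h) (i : ℤ) : dist (h (i + 1)) (h i) ≤ α + β := by
  simpa [Int.dist_eq] using (hh (i + 1) i).2

lemma le_apply_of_lt_dist {h : X → ℤ} (hh : IsQuasiIsometricEmbedding α β h) (hα : 0 < α)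
    {t : ℤ} (ht : ∀ x, t ≤ h x) {x₀ x : X} {c : ℤ} (hc : h x₀ ≤ c)
    (hx : α * (c - t + β) < dist x x₀) : c ≤ h x := by
  by_contra! hlt
  have hclose : dist (h x) (h x₀) ≤ c - t := by
    rw [Int.dist_eq']
    exact_mod_cast abs_sub_le_iff.2 ⟨by linarith [ht x₀], by linarith [ht x]⟩
  have := hh.dist_le hα x x₀
  have : α * (dist (h x) (h x₀) + β) ≤ α * (c - t + β) := by gcongr
  linarith

lemma not_bddBelow_range {h : ℤ → ℤ} (hh : IsQuasiIsometricEmbedding α β h) (hα : 0 < α) :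
    ¬BddBelow (Set.range h) := by
  rintro ⟨t, ht⟩
  replace ht : ∀ i, t ≤ h i := fun i => ht ⟨i, rfl⟩
  set s := α + β with hs
  -- `D` is large enough that points near the level `c` on opposite sides of `0` are too far apart.
  obtain ⟨D, hD⟩ := exists_nat_gt (s + β + α ^ 2 * (2 * s + β) / 2)
  set c := h 0 + D
  have hc : h 0 ≤ c := by omega
  obtain ⟨N, hN⟩ := exists_nat_gt (α * (c - t + β))
  have hN_dist : ∀ m : ℤ, |m| = N → α * (c - t + β) < dist m 0 := fun m hm => by
    rwa [Int.dist_eq', sub_zero, hm, Int.cast_natCast]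
  obtain ⟨j, ⟨hj, -⟩, hjc⟩ := exists_mem_Icc_dist_le_of_mem_uIcc hh.dist_succ_le
    (Int.natCast_nonneg N) (Set.mem_uIcc.2 <| .inl
      ⟨hc, hh.le_apply_of_lt_dist hα ht hc (hN_dist N (abs_of_nonneg (by omega)))⟩)
  obtain ⟨k, ⟨-, hk⟩, hkc⟩ := exists_mem_Icc_dist_le_of_mem_uIcc hh.dist_succ_le
    (neg_nonpos.2 (Int.natCast_nonneg N)) (Set.mem_uIcc.2 <| .inr
      ⟨hc, hh.le_apply_of_lt_dist hα ht hc (hN_dist (-N) (by simp))⟩)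
  have hfar : ∀ m : ℤ, dist (h m) c ≤ s → D - s - β ≤ α * dist m 0 := fun m hm => by
    have hcD : dist c (h 0) = D := by simp [c]
    linarith [dist_triangle c (h m) (h 0), dist_comm c (h m), (hh m 0).2]
  have hjk : dist j k = dist j 0 + dist k 0 := by
    simp only [Int.dist_eq', sub_zero, abs_of_nonneg hj, abs_of_nonpos hk,
      abs_of_nonneg (sub_nonneg.2 (hk.trans hj))]
    push_cast
    ring
  have hnear : dist j k ≤ α * (2 * s + β) := (hh.dist_le hα j k).trans <| by
    gcongr
    linarith [dist_triangle_right (h j) (h k) c]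
  have := mul_le_mul_of_nonneg_left (hjk ▸ hnear) hα.le
  linarith [hfar j hjc, hfar k hkc]

lemma not_bddAbove_range {h : ℤ → ℤ} (hh : IsQuasiIsometricEmbedding α β h) (hα : 0 < α) :
    ¬BddAbove (Set.range h) :=
  fun hbdd => hh.neg.not_bddBelow_range hα hbdd.range_neg

lemma exists_dist_le {h : ℤ → ℤ} (hh : IsQuasiIsometricEmbedding α β h) (hα : 0 < α) (t : ℤ) :
    ∃ k, dist (h k) t ≤ α + β := by
  obtain ⟨-, ⟨a, rfl⟩, ha⟩ := not_bddBelow_iff.1 (hh.not_bddBelow_range hα) t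
  obtain ⟨-, ⟨b, rfl⟩, hb⟩ := not_bddAbove_iff.1 (hh.not_bddAbove_range hα) t
  have ht : t ∈ Set.uIcc (h a) (h b) := Set.mem_uIcc.2 (.inl ⟨ha.le, hb.le⟩)
  rcases le_total a b with hab | hba
  · obtain ⟨k, -, hk⟩ := exists_mem_Icc_dist_le_of_mem_uIcc hh.dist_succ_le hab ht
    exact ⟨k, hk⟩
  · obtain ⟨k, -, hk⟩ := exists_mem_Icc_dist_le_of_mem_uIcc hh.dist_succ_le hba
      (Set.uIcc_comm (h a) (h b) ▸ ht)
    exact ⟨k, hk⟩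

end IsQuasiIsometricEmbedding

theorem vertex_close_to_biinfinite_geodesic_general {V : Type*} (X : SimpleGraph V)
    (α β : ℝ) (hα : 1 ≤ α) (f : V → ℤ)
    (hf1 : ∀ u v : V, α⁻¹ * (X.dist u v : ℝ) - β ≤ (|f u - f v| : ℝ) ∧
        (|f u - f v| : ℝ) ≤ α * (X.dist u v : ℝ) + β)
    (ℓ : ℤ → V) (hgeo : ∀ i j : ℤ, (X.dist (ℓ i) (ℓ j) : ℤ) = |i - j|)
    (x : V) : ∃ i : ℤ, (X.dist x (ℓ i) : ℝ) ≤ α ^ 2 + 2 * α * β := by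
  have hα₀ : 0 < α := by linarith
  have hg : IsQuasiIsometricEmbedding α β (f ∘ ℓ) := fun i j => by
    have hd : (X.dist (ℓ i) (ℓ j) : ℝ) = dist i j := by
      rw [Int.dist_eq', ← hgeo]; rfl
    rw [← hd, Int.dist_eq]
    exact hf1 (ℓ i) (ℓ j)
  obtain ⟨k, hk⟩ := hg.exists_dist_le hα₀ (f x)
  refine ⟨k, ?_⟩
  have hk' : (|f x - f (ℓ k)| : ℝ) ≤ α + β := by
    rwa [dist_comm, Int.dist_eq] at hk
  have := mul_le_mul_of_nonneg_left (add_le_add_right hk' β) hα₀.le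
  linarith [le_mul_add_of_inv_mul_sub_le hα₀ (hf1 x (ℓ k)).1]

/-- In a connected, locally finite simple graph quasi-isometric to ℤ,
every vertex lies within distance `α² + 2αβ` of any bi-infinite geodesic. -/
theorem vertex_close_to_biinfinite_geodesic {V : Type*} (X : SimpleGraph V)
    (hconn : X.Connected) (hlf : ∀ v : V, (X.neighborSet v).Finite)
    (α β γ : ℝ) (hα : 1 ≤ α) (hβ : 0 ≤ β) (hγ : 0 ≤ γ) (f : V → ℤ)
    (hf1 : ∀ u v : V, α⁻¹ * (X.dist u v : ℝ) - β ≤ (|f u - f v| : ℝ) ∧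
        (|f u - f v| : ℝ) ≤ α * (X.dist u v : ℝ) + β)
    (hf2 : ∀ n : ℤ, ∃ x : V, (|f x - n| : ℝ) ≤ γ)
    (ℓ : ℤ → V) (hgeo : ∀ i j : ℤ, (X.dist (ℓ i) (ℓ j) : ℤ) = |i - j|)
    (x : V) : ∃ i : ℤ, (X.dist x (ℓ i) : ℝ) ≤ α ^ 2 + 2 * α * β :=
  vertex_close_to_biinfinite_geodesic_general X α β hα f hf1 ℓ hgeo x
end

section
/- Let G be a group with a finite symmetric generating set S acting on a set X, and consider the Schreier graph of the action with graph distance d. Let Y ⊆ X be a subset whose boundary ∂Y (with respect to the Schreier graph) is finite. Then for every g ∈ G, the set (g•Y) \ Y is finite. -/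
open Pointwise

/-- The Schreier graph of an action of `G` on `X` with respect to a (symmetric)
generating set `S`: vertices `x ≠ y` are adjacent iff `y = s • x` for some `s ∈ S`. -/
def schreierGraph {G : Type*} [Group G] (X : Type*) [MulAction G X] (S : Finset G) :
    SimpleGraph X :=
  SimpleGraph.fromRel (fun x y => ∃ s ∈ S, y = s • x)

/-- If `Y ⊆ X` has finite boundary in the Schreier graph of a finitely
generated group action (with finite symmetric generating set `S`), then `g • Y \ Y`
is finite for every `g ∈ G`. -/
theorem smul_sdiff_finite_of_finite_boundary {G X : Type*} [Group G] [MulAction G X]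
    (S : Finset G) (hsym : ∀ s ∈ S, s⁻¹ ∈ S)
    (hgen : Subgroup.closure (S : Set G) = ⊤) (Y : Set X)
    (hbd : {x ∈ Y | ∃ y ∉ Y, (schreierGraph X S).Adj x y}.Finite)
    (g : G) : (g • Y \ Y).Finite := by
  -- base case: generators
  have base : ∀ s ∈ S, (s • Y \ Y).Finite := by
    intro s hs
    apply Set.Finite.subset (hbd.image (fun x => s • x))
    rintro x ⟨⟨y, hy, rfl⟩, hx⟩
    have hx' : s • y ∉ Y := hx
    refine ⟨y, ⟨hy, s • y, hx', ?_⟩, rfl⟩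
    have hne : y ≠ s • y := by rintro h; exact hx' (h ▸ hy)
    exact SimpleGraph.fromRel_adj .. |>.mpr ⟨hne, Or.inl ⟨s, hs, rfl⟩⟩
  -- strengthened property, closed under all closure operations
  have key : ∀ g : G, (g • Y \ Y).Finite ∧ (g⁻¹ • Y \ Y).Finite := by
    intro g
    have hg : g ∈ Subgroup.closure (S : Set G) := hgen ▸ Subgroup.mem_top g
    induction hg using Subgroup.closure_induction with
    | mem s hs => exact ⟨base s hs, base s⁻¹ (hsym s hs)⟩
    | one => simp
    | mul a b _ _ ha hb =>
      have step : ∀ a b : G, (a • Y \ Y).Finite → (b • Y \ Y).Finite →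
          ((a * b) • Y \ Y).Finite := by
        intro a b ha hb
        apply Set.Finite.subset ((hb.image (fun x => a • x)).union ha)
        rintro x ⟨⟨y, hy, rfl⟩, hx⟩
        simp only [mul_smul] at hx ⊢
        by_cases hby : b • y ∈ Y
        · exact Or.inr ⟨Set.smul_mem_smul_set hby, hx⟩
        · exact Or.inl (Set.mem_image_of_mem _ ⟨Set.smul_mem_smul_set hy, hby⟩)
      refine ⟨step a b ha.1 hb.1, ?_⟩
      rw [mul_inv_rev]
      exact step b⁻¹ a⁻¹ hb.2 ha.2
    | inv a _ ha => exact ⟨ha.2, by simpa using ha.1⟩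
  exact (key g).1
end

section
/- Let G be a group with a finite symmetric generating set S acting on a set X, and consider the Schreier graph of the action with graph distance d. Let Y ⊆ X be a subset whose boundary ∂Y (with respect to the Schreier graph) is finite, and let φ : X → X be a piecewise-G bijection, i.e., a bijection for which there exists a finite subset T ⊆ G with φ(x) ∈ T•x for all x ∈ X. Then the symmetric difference Y △ φ(Y) is finite. -/
/-- If `Y ⊆ X` has finite boundary in the Schreier graph and `φ` is a
piecewise-`G` bijection of `X`, then the symmetric difference `Y △ φ(Y)` is finite. -/
theorem symmDiff_finite_of_piecewise_bijection {G X : Type*} [Group G] [MulAction G X]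
    (S : Finset G) (hsym : ∀ s ∈ S, s⁻¹ ∈ S)
    (hgen : Subgroup.closure (S : Set G) = ⊤) (Y : Set X)
    (hbd : {x ∈ Y | ∃ y ∉ Y, (schreierGraph X S).Adj x y}.Finite)
    (φ : X → X) (hbij : Function.Bijective φ)
    (T : Finset G) (hφ : ∀ x : X, ∃ t ∈ T, φ x = t • x) :
    (symmDiff Y (φ '' Y)).Finite := by
  have key : ∀ g : G, {x : X | ¬(x ∈ Y ↔ g • x ∈ Y)}.Finite := by
    intro g
    have hg : g ∈ Subgroup.closure (S : Set G) := by rw [hgen]; trivial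
    induction hg using Subgroup.closure_induction with
    | mem s hs =>
      have hs' : s ∈ S := hs
      apply (hbd.union (hbd.image (fun y => s⁻¹ • y))).subset
      intro x hx
      simp only [Set.mem_setOf_eq] at hx
      by_cases hxY : x ∈ Y
      · have hsx : s • x ∉ Y := fun h => hx ⟨fun _ => h, fun _ => hxY⟩
        left
        refine ⟨hxY, s • x, hsx, ?_⟩
        rw [schreierGraph, SimpleGraph.fromRel_adj]
        exact ⟨fun h => hsx (h ▸ hxY), Or.inl ⟨s, hs', rfl⟩⟩
      · have hsx : s • x ∈ Y := by
          by_contra h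
          exact hx ⟨fun h' => absurd h' hxY, fun h' => absurd h' h⟩
        right
        refine ⟨s • x, ⟨hsx, x, hxY, ?_⟩, by simp⟩
        rw [schreierGraph, SimpleGraph.fromRel_adj]
        exact ⟨fun h => hxY (h ▸ hsx), Or.inl ⟨s⁻¹, hsym s hs', by simp⟩⟩
    | one =>
      convert Set.finite_empty
      ext x; simp
    | mul g h hg hh ihg ihh =>
      apply (ihh.union (ihg.image (fun y => h⁻¹ • y))).subset
      intro x hx
      simp only [Set.mem_setOf_eq, mul_smul] at hx
      by_cases hxh : x ∈ Y ↔ h • x ∈ Y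
      · right
        refine ⟨h • x, ?_, by simp⟩
        simp only [Set.mem_setOf_eq]
        exact fun h' => hx (hxh.trans h')
      · exact Or.inl hxh
    | inv g hg ih =>
      apply (ih.image (fun y => g • y)).subset
      intro x hx
      simp only [Set.mem_setOf_eq] at hx
      refine ⟨g⁻¹ • x, ?_, by simp⟩
      simp only [Set.mem_setOf_eq, smul_inv_smul]
      exact fun h => hx h.symm
  have hfin : (⋃ t ∈ T, ({x : X | ¬(x ∈ Y ↔ t⁻¹ • x ∈ Y)} ∪
      (fun y => t • y) '' {x : X | ¬(x ∈ Y ↔ t • x ∈ Y)})).Finite :=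
    T.finite_toSet.biUnion fun t _ => (key t⁻¹).union ((key t).image _)
  apply hfin.subset
  intro x hx
  rw [Set.mem_symmDiff] at hx
  rcases hx with ⟨hxY, hxφ⟩ | ⟨hxφ, hxY⟩
  · obtain ⟨y, hy⟩ := hbij.surjective x
    have hyY : y ∉ Y := fun h => hxφ ⟨y, h, hy⟩
    obtain ⟨t, htT, ht⟩ := hφ y
    have : t⁻¹ • x ∉ Y := by rw [← hy, ht, inv_smul_smul]; exact hyY
    exact Set.mem_biUnion htT (Or.inl fun h => this (h.mp hxY))
  · obtain ⟨y, hyY, hy⟩ := hxφ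
    obtain ⟨t, htT, ht⟩ := hφ y
    refine Set.mem_biUnion htT (Or.inr ⟨y, ?_, (ht ▸ hy : t • y = x)⟩)
    simp only [Set.mem_setOf_eq]
    rw [ht] at hy
    exact fun h => hxY (hy ▸ h.mp hyY)
end

section
/- Let X be a connected, locally finite simple graph with vertex set V and graph distance d, let ℓ : ℤ → V be a bi-infinite geodesic, and let m ∈ ℕ be such that for every x ∈ V there exists i ∈ ℤ with d(x, ℓ(i)) ≤ m. If A ⊆ V is infinite and its boundary ∂A is finite, then A contains at least one end of ℓ: either there exists N with ℓ(i) ∈ A for all i ≥ N, or there exists N with ℓ(i) ∈ A for all i ≤ −N. -/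
/-!
The finite boundary `∂A` lies in a ball of some radius `K` around `ℓ 0`. Beyond index `K` in
either direction the geodesic never meets `∂A`, so once it enters `A` there it stays in `A`.
Since `A` is infinite and balls are finite, `A` has a point `x` at distance more than `m + K`
from `ℓ 0`. A shortest walk from `x` to a point `ℓ i` within distance `m` cannot cross `∂A`
(which lies within `K` of `ℓ 0`), so `ℓ i ∈ A`; and `|i| > K` by the triangle inequality.
-/

namespace SimpleGraph

variable {V : Type*} {G : SimpleGraph V}

def vertexBoundary (G : SimpleGraph V) (A : Set V) : Set V :=
  {x ∈ A | ∃ y ∉ A, G.Adj x y}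

theorem finite_setOf_dist_le (hconn : G.Connected) (hlf : ∀ v, (G.neighborSet v).Finite)
    (c : V) (R : ℕ) : {x | G.dist x c ≤ R}.Finite := by
  induction R with
  | zero => simp [hconn.dist_eq_zero_iff]
  | succ R ih =>
    refine (ih.union (ih.biUnion fun y _ ↦ hlf y)).subset fun x (hx : G.dist x c ≤ R + 1) ↦ ?_
    obtain ⟨w, hw⟩ := hconn.exists_walk_length_eq_dist x c
    cases w with
    | nil => exact .inl (by simp)
    | @cons _ y _ hadj w' =>
      have hy : G.dist y c ≤ R := (dist_le w').trans (by simp only [Walk.length_cons] at hw; lia)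
      exact .inr (Set.mem_biUnion hy hadj.symm)

theorem Walk.exists_mem_vertexBoundary_dist_le {x y : V} (w : G.Walk x y) {A : Set V}
    (hx : x ∈ A) (hy : y ∉ A) : ∃ p ∈ G.vertexBoundary A, G.dist x p ≤ w.length := by
  classical
  obtain ⟨d, hd, hdA, hdA'⟩ := w.exists_boundary_dart A hx hy
  have hmem := w.dart_fst_mem_support_of_mem_darts hd
  exact ⟨d.fst, ⟨hdA, d.snd, hdA', d.adj⟩,
    (dist_le _).trans (w.length_takeUntil_le_length hmem)⟩

theorem Connected.exists_mem_vertexBoundary_dist_le (hconn : G.Connected) {A : Set V}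
    {x y : V} (hx : x ∈ A) (hy : y ∉ A) : ∃ p ∈ G.vertexBoundary A, G.dist x p ≤ G.dist x y := by
  obtain ⟨w, hw⟩ := hconn.exists_walk_length_eq_dist x y
  exact hw ▸ w.exists_mem_vertexBoundary_dist_le hx hy

theorem adj_succ_of_dist_eq_abs_sub {ℓ : ℤ → V}
    (hgeo : ∀ i j : ℤ, (G.dist (ℓ i) (ℓ j) : ℤ) = |i - j|) (i : ℤ) : G.Adj (ℓ i) (ℓ (i + 1)) := by
  rw [← dist_eq_one_iff_adj, ← Nat.cast_inj (R := ℤ), hgeo]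
  simp

section Tails

variable {u : ℤ → V} {A : Set V} {N : ℤ}

theorem forall_ge_mem_of_notMem_vertexBoundary (hadj : ∀ i, G.Adj (u i) (u (i + 1)))
    (hN : ∀ i ≥ N, u i ∉ G.vertexBoundary A) (hNA : u N ∈ A) : ∀ i ≥ N, u i ∈ A := by
  refine Int.leInduction hNA fun i hi hiA ↦ ?_
  by_contra h
  exact hN i hi ⟨hiA, u (i + 1), h, hadj i⟩

theorem forall_le_mem_of_notMem_vertexBoundary (hadj : ∀ i, G.Adj (u i) (u (i + 1)))
    (hN : ∀ i ≤ N, u i ∉ G.vertexBoundary A) (hNA : u N ∈ A) : ∀ i ≤ N, u i ∈ A := by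
  refine Int.leInductionDown hNA fun i hi hiA ↦ ?_
  by_contra h
  exact hN i hi ⟨hiA, u (i - 1), h, by simpa using (hadj (i - 1)).symm⟩

end Tails

end SimpleGraph

open SimpleGraph

/-- In a connected, locally finite simple graph with a bi-infinite geodesic
`ℓ` such that every vertex is within distance `m` of `ℓ`, every infinite set `A` with
finite boundary contains at least one end of `ℓ`. -/
theorem infinite_set_contains_an_end {V : Type*} (X : SimpleGraph V)
    (hconn : X.Connected) (hlf : ∀ v : V, (X.neighborSet v).Finite)
    (ℓ : ℤ → V) (hgeo : ∀ i j : ℤ, (X.dist (ℓ i) (ℓ j) : ℤ) = |i - j|)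
    (m : ℕ) (hm : ∀ x : V, ∃ i : ℤ, X.dist x (ℓ i) ≤ m)
    (A : Set V) (hA : A.Infinite)
    (hbd : {x ∈ A | ∃ y ∉ A, X.Adj x y}.Finite) :
    (∃ N : ℤ, ∀ i ≥ N, ℓ i ∈ A) ∨ (∃ N : ℤ, ∀ i ≤ -N, ℓ i ∈ A) := by
  obtain ⟨K, hK⟩ : ∃ K : ℕ, ∀ p ∈ X.vertexBoundary A, X.dist p (ℓ 0) ≤ K :=
    (hbd.image (X.dist · (ℓ 0))).bddAbove.imp fun _ hK _ hp ↦ hK ⟨_, hp, rfl⟩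
  have hdist0 (i : ℤ) : (X.dist (ℓ i) (ℓ 0) : ℤ) = |i| := by simpa using hgeo i 0
  have hfar (i : ℤ) (hi : K < |i|) : ℓ i ∉ X.vertexBoundary A := fun hp ↦ by
    have := hK _ hp
    have := hdist0 i
    lia
  obtain ⟨x, hxA, hx⟩ : ∃ x ∈ A, m + K < X.dist x (ℓ 0) :=
    (hA.sdiff (finite_setOf_dist_le hconn hlf (ℓ 0) (m + K))).nonempty.imp
      fun _ h ↦ ⟨h.1, not_le.mp h.2⟩
  obtain ⟨i, hi⟩ := hm x
  have hiA : ℓ i ∈ A := by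
    by_contra hiA
    obtain ⟨p, hp, hxp⟩ := hconn.exists_mem_vertexBoundary_dist_le hxA hiA
    have := hconn.dist_triangle (u := x) (v := p) (w := ℓ 0)
    have := hK p hp
    lia
  have hiK : K < |i| := by
    have := hconn.dist_triangle (u := x) (v := ℓ i) (w := ℓ 0)
    have := hdist0 i
    lia
  have hadj := adj_succ_of_dist_eq_abs_sub hgeo
  rcases lt_abs.mp hiK with hpos | hneg
  · exact .inl ⟨i, forall_ge_mem_of_notMem_vertexBoundary hadj
      (fun j hj ↦ hfar j (lt_abs.mpr (.inl (by lia)))) hiA⟩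
  · exact .inr ⟨-i, fun j hj ↦ forall_le_mem_of_notMem_vertexBoundary hadj
      (fun j hj ↦ hfar j (lt_abs.mpr (.inr (by lia)))) hiA j (by lia)⟩
end

section
/- Let X be a connected, locally finite simple graph with vertex set V and graph distance d, and suppose there exist real constants α ≥ 1, β ≥ 0, γ ≥ 0 and a map f : V → ℤ with (i) α⁻¹·d(u,v) − β ≤ |f(u) − f(v)| ≤ α·d(u,v) + β for all u, v ∈ V, and (ii) for every n ∈ ℤ there exists x ∈ V with |f(x) − n| ≤ γ. Let Y = {x ∈ V : f(x) ≥ 0} and let ℓ : ℤ → V be a bi-infinite geodesic. Then Y contains exactly one end of ℓ: exactly one of the following holds — (there exists N with ℓ(i) ∈ Y for all i ≥ N) or (there exists N with ℓ(i) ∈ Y for all i ≤ −N). -/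
private lemma ivt_aux (g : ℤ → ℤ) (c : ℤ) (h1 : ∀ i, |g (i+1) - g i| ≤ c)
    (A a : ℤ) (ha : g a < A) : ∀ b, a ≤ b → (A ≤ g b →
    ∃ k, a ≤ k ∧ k ≤ b ∧ A ≤ g k ∧ g k < A + c) := by
  refine Int.le_induction ?_ ?_
  · intro h; omega
  · intro b hb ih h
    by_cases hgb : A ≤ g b
    · obtain ⟨k, h₁, h₂, h₃, h₄⟩ := ih hgb
      exact ⟨k, h₁, by omega, h₃, h₄⟩
    · refine ⟨b+1, by omega, le_refl _, h, ?_⟩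
      have := abs_le.mp (h1 b)
      omega

private lemma lip_aux (g : ℤ → ℤ) (c : ℤ) (h1 : ∀ i, |g (i+1) - g i| ≤ c)
    (a : ℤ) : ∀ b, a ≤ b → |g b - g a| ≤ c * (b - a) := by
  refine Int.le_induction ?_ ?_
  · simp
  · intro b hb ih
    have h := h1 b
    have habs : |g (b+1) - g a| ≤ |g (b+1) - g b| + |g b - g a| := by
      have := abs_add_le (g (b+1) - g b) (g b - g a); simpa using this
    have he : c * (b + 1 - a) = c * (b - a) + c := by ring
    linarith

private lemma big_aux (g : ℤ → ℤ) (K B : ℤ) (hK : 1 ≤ K) (hB : 0 ≤ B)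
    (h2 : ∀ i j : ℤ, |i - j| ≤ K * (|g i - g j| + B)) (M : ℤ) (hM : 0 ≤ M) :
    ∀ i : ℤ, K * ((M + |g 0|) + B) + 1 ≤ i → M < |g i| := by
  intro i hi
  by_contra h
  push_neg at h
  have h0 := h2 i 0
  have hnn : (0:ℤ) ≤ K * ((M + |g 0|) + B) :=
    mul_nonneg (by omega) (by positivity)
  have hipos : (0:ℤ) ≤ i := by linarith
  have hii : |i - 0| = i := by rw [sub_zero]; exact abs_of_nonneg hipos
  have htri : |g i - g 0| ≤ M + |g 0| := by
    have h3 := abs_sub (g i) (g 0)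
    omega
  have hmul : K * (|g i - g 0| + B) ≤ K * ((M + |g 0|) + B) :=
    mul_le_mul_of_nonneg_left (by omega) (by omega)
  linarith

private lemma end_behavior (g : ℤ → ℤ) (c K B : ℤ) (hc : 1 ≤ c) (hK : 1 ≤ K) (hB : 0 ≤ B)
    (h1 : ∀ i, |g (i+1) - g i| ≤ c)
    (h2 : ∀ i j : ℤ, |i - j| ≤ K * (|g i - g j| + B)) :
    (∀ A : ℤ, ∃ N : ℤ, ∀ i ≥ N, A ≤ g i) ∨ (∀ A : ℤ, ∃ N : ℤ, ∀ i ≥ N, g i ≤ A) := by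
  set T : ℤ := K * ((c + |g 0|) + B) + 1 with hT
  have hbigc : ∀ i : ℤ, T ≤ i → c < |g i| := big_aux g K B hK hB h2 c (by omega)
  -- sign is constant from T on
  have hsign : ∀ i, T ≤ i → ((0 < g T → 0 < g i) ∧ (g T < 0 → g i < 0)) := by
    refine Int.le_induction ?_ ?_
    · exact ⟨fun h => h, fun h => h⟩
    · intro i hi ih
      have hstep := abs_le.mp (h1 i)
      have hci := hbigc i hi
      have hci1 := hbigc (i+1) (by omega)
      rcases abs_cases (g i) with ⟨e1, _⟩ | ⟨e1, _⟩ <;>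
        rcases abs_cases (g (i+1)) with ⟨e2, _⟩ | ⟨e2, _⟩ <;>
        constructor <;> intro hs <;> omega
  have hTne : g T ≠ 0 := by have := hbigc T le_rfl; rcases abs_cases (g T) with ⟨e,_⟩|⟨e,_⟩ <;> omega
  rcases lt_or_gt_of_ne hTne with hneg | hpos
  · right
    intro A
    refine ⟨max T (K * ((|A| + |g 0|) + B) + 1), fun i hi => ?_⟩
    have h1' := (hsign i (le_trans (le_max_left _ _) hi)).2 hneg
    have h2' := big_aux g K B hK hB h2 |A| (abs_nonneg A) i (le_trans (le_max_right _ _) hi)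
    rcases abs_cases (g i) with ⟨e,_⟩|⟨e,_⟩ <;> rcases abs_cases A with ⟨e2,_⟩|⟨e2,_⟩ <;> omega
  · left
    intro A
    refine ⟨max T (K * ((|A| + |g 0|) + B) + 1), fun i hi => ?_⟩
    have h1' := (hsign i (le_trans (le_max_left _ _) hi)).1 hpos
    have h2' := big_aux g K B hK hB h2 |A| (abs_nonneg A) i (le_trans (le_max_right _ _) hi)
    rcases abs_cases (g i) with ⟨e,_⟩|⟨e,_⟩ <;> rcases abs_cases A with ⟨e2,_⟩|⟨e2,_⟩ <;> omega

private lemma not_both_aux (g : ℤ → ℤ) (c K B : ℤ) (hc : 1 ≤ c) (hK : 1 ≤ K) (hB : 0 ≤ B)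
    (h1 : ∀ i, |g (i+1) - g i| ≤ c)
    (h2 : ∀ i j : ℤ, |i - j| ≤ K * (|g i - g j| + B))
    (hp : ∀ A : ℤ, ∃ N : ℤ, ∀ i ≥ N, A ≤ g i)
    (hm : ∀ A : ℤ, ∃ N : ℤ, ∀ i ≤ N, A ≤ g i) : False := by
  set A : ℤ := g 0 + c * (K * (c + B) + 1) with hA
  have hKcB : 0 ≤ K * (c + B) := mul_nonneg (by omega) (by omega)
  have hA0 : g 0 < A := by nlinarith
  -- point on the positive side
  obtain ⟨N, hN⟩ := hp A
  obtain ⟨i, hi0, _, hgi, hgi'⟩ :=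
    ivt_aux g c h1 A 0 hA0 (max N 0) (le_max_right _ _) (hN _ (le_max_left _ _))
  -- point on the negative side, via g' k = g (-k)
  obtain ⟨N', hN'⟩ := hm A
  have h1' : ∀ k : ℤ, |(fun k => g (-k)) (k+1) - (fun k => g (-k)) k| ≤ c := by
    intro k
    show |g (-(k+1)) - g (-k)| ≤ c
    have e : (-k : ℤ) = -(k+1)+1 := by ring
    rw [abs_sub_comm, e]
    exact h1 (-(k+1))
  obtain ⟨k, hk0, _, hgk, hgk'⟩ :=
    ivt_aux (fun k => g (-k)) c h1' A 0 (by simpa using hA0) (-(min N' 0))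
      (by omega) (by simpa using hN' _ (min_le_left _ _))
  have hgk2 : A ≤ g (-k) := hgk
  have hgk2' : g (-k) < A + c := hgk'
  set j : ℤ := -k with hj
  have hj0 : j ≤ 0 := by omega
  -- |g i - g j| ≤ c
  have hgij : |g i - g j| ≤ c := by
    rw [abs_le]; constructor <;> omega
  -- i - j is small
  have hsmall : i - j ≤ K * (c + B) := by
    have := h2 i j
    have hmul : K * (|g i - g j| + B) ≤ K * (c + B) :=
      mul_le_mul_of_nonneg_left (by omega) (by omega)
    have habs2 : |i - j| = i - j := abs_of_nonneg (by omega)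
    linarith
  -- i is big
  have hlip := lip_aux g c h1 0 i hi0
  have hgi0 : g i - g 0 ≤ c * i := by
    have := abs_le.mp (by simpa using hlip)
    omega
  have hcbig : c * (K * (c + B) + 1) ≤ c * i := by linarith
  have hibig : K * (c + B) + 1 ≤ i := le_of_mul_le_mul_left hcbig (by omega)
  linarith

/-- In a connected, locally finite simple graph quasi-isometric to ℤ,
with `Y = {x : f x ≥ 0}`, the set `Y` contains exactly one end of any bi-infinite
geodesic `ℓ`. -/
theorem nonneg_part_contains_exactly_one_end {V : Type*} (X : SimpleGraph V)
    (hconn : X.Connected) (hlf : ∀ v : V, (X.neighborSet v).Finite)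
    (α β γ : ℝ) (hα : 1 ≤ α) (hβ : 0 ≤ β) (hγ : 0 ≤ γ) (f : V → ℤ)
    (hf1 : ∀ u v : V, α⁻¹ * (X.dist u v : ℝ) - β ≤ (|f u - f v| : ℝ) ∧
        (|f u - f v| : ℝ) ≤ α * (X.dist u v : ℝ) + β)
    (hf2 : ∀ n : ℤ, ∃ x : V, (|f x - n| : ℝ) ≤ γ)
    (ℓ : ℤ → V) (hgeo : ∀ i j : ℤ, (X.dist (ℓ i) (ℓ j) : ℤ) = |i - j|) :
    Xor' (∃ N : ℤ, ∀ i ≥ N, ℓ i ∈ {x : V | 0 ≤ f x})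
      (∃ N : ℤ, ∀ i ≤ -N, ℓ i ∈ {x : V | 0 ≤ f x}) := by
  have hαpos : (0:ℝ) < α := by linarith
  set g : ℤ → ℤ := fun i => f (ℓ i) with hgdef
  have hd : ∀ i j : ℤ, (X.dist (ℓ i) (ℓ j) : ℝ) = |(i : ℝ) - j| := by
    intro i j
    have := hgeo i j
    have h2 : ((X.dist (ℓ i) (ℓ j) : ℤ) : ℝ) = ((|i - j| : ℤ) : ℝ) := by exact_mod_cast this
    push_cast at h2
    exact h2
  set c : ℤ := ⌈α + β⌉ with hcdef
  set K : ℤ := ⌈α⌉ with hKdef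
  set B : ℤ := ⌈β⌉ with hBdef
  have hc : 1 ≤ c := by
    have h := Int.le_ceil (α + β)
    have : (1:ℝ) ≤ (c:ℝ) := by linarith
    exact_mod_cast this
  have hK : 1 ≤ K := by
    have h := Int.le_ceil α
    have : (1:ℝ) ≤ (K:ℝ) := by linarith
    exact_mod_cast this
  have hB : 0 ≤ B := by
    have h := Int.le_ceil β
    have : (0:ℝ) ≤ (B:ℝ) := by linarith
    exact_mod_cast this
  have h1 : ∀ i : ℤ, |g (i+1) - g i| ≤ c := by
    intro i
    have hub := (hf1 (ℓ (i+1)) (ℓ i)).2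
    have hdist : (X.dist (ℓ (i+1)) (ℓ i) : ℝ) = 1 := by
      rw [hd]; push_cast; rw [show ((i:ℝ)+1-i) = 1 by ring, abs_one]
    rw [hdist] at hub
    have hceil := Int.le_ceil (α + β)
    have : (|f (ℓ (i+1)) - f (ℓ i)| : ℝ) ≤ (c:ℝ) := by linarith
    exact_mod_cast this
  have h2 : ∀ i j : ℤ, |i - j| ≤ K * (|g i - g j| + B) := by
    intro i j
    have hlb := (hf1 (ℓ i) (ℓ j)).1
    rw [hd] at hlb
    have hKr := Int.le_ceil α
    have hBr := Int.le_ceil β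
    have habs : (0:ℝ) ≤ (|f (ℓ i) - f (ℓ j)| : ℝ) := by positivity
    have hinv : α⁻¹ * α = 1 := inv_mul_cancel₀ (ne_of_gt hαpos)
    have key : |(i:ℝ) - j| ≤ (K:ℝ) * ((|f (ℓ i) - f (ℓ j)| : ℝ) + (B:ℝ)) := by
      nlinarith [abs_nonneg ((i:ℝ) - j)]
    have key2 : ((|i - j| : ℤ) : ℝ) ≤ ((K * (|g i - g j| + B) : ℤ) : ℝ) := by
      push_cast
      exact key
    exact_mod_cast key2
  have hendP := end_behavior g c K B hc hK hB h1 h2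
  have h1₂ : ∀ k : ℤ, |(fun k => g (-k)) (k+1) - (fun k => g (-k)) k| ≤ c := by
    intro k
    show |g (-(k+1)) - g (-k)| ≤ c
    have e : (-k : ℤ) = -(k+1)+1 := by ring
    rw [abs_sub_comm, e]
    exact h1 (-(k+1))
  have h2₂ : ∀ i j : ℤ, |i - j| ≤ K * (|(fun k => g (-k)) i - (fun k => g (-k)) j| + B) := by
    intro i j
    show |i - j| ≤ K * (|g (-i) - g (-j)| + B)
    have := h2 (-i) (-j)
    rw [show ((-i) - (-j) : ℤ) = -(i - j) by ring, abs_neg] at this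
    exact this
  have hendM := end_behavior (fun k => g (-k)) c K B hc hK hB h1₂ h2₂
  rcases hendP with hpP | hmP <;> rcases hendM with hpM | hmM
  · -- both ends go to +∞ : impossible
    exfalso
    refine not_both_aux g c K B hc hK hB h1 h2 hpP ?_
    intro A
    obtain ⟨N, hN⟩ := hpM A
    refine ⟨-N, fun i hi => ?_⟩
    have := hN (-i) (by omega)
    simpa using this
  · -- +∞ at +end, -∞ at -end : Y contains exactly the + end
    unfold Xor'
    refine Or.inl ⟨?_, ?_⟩
    · obtain ⟨N, hN⟩ := hpP 0
      exact ⟨N, fun i hi => hN i hi⟩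
    · rintro ⟨N, hN⟩
      obtain ⟨N₀, hN₀⟩ := hmM (-1)
      have ha : (0:ℤ) ≤ g (-(max N N₀)) := hN (-(max N N₀)) (by omega)
      have hb : g (-(max N N₀)) ≤ -1 := hN₀ (max N N₀) (le_max_right _ _)
      omega
  · -- -∞ at +end, +∞ at -end : Y contains exactly the - end
    unfold Xor'
    refine Or.inr ⟨?_, ?_⟩
    · obtain ⟨N, hN⟩ := hpM 0
      refine ⟨N, fun i hi => ?_⟩
      have := hN (-i) (by omega)
      simpa using this
    · rintro ⟨N, hN⟩
      obtain ⟨N₀, hN₀⟩ := hmP (-1)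
      have ha : (0:ℤ) ≤ g (max N N₀) := hN (max N N₀) (le_max_left _ _)
      have hb : g (max N N₀) ≤ -1 := hN₀ (max N N₀) (le_max_right _ _)
      omega
  · -- both ends go to -∞ : impossible
    exfalso
    refine not_both_aux (fun i => -g i) c K B hc hK hB ?_ ?_ ?_ ?_
    · intro i
      show |(-g (i+1)) - (-g i)| ≤ c
      rw [show (-g (i+1)) - (-g i) = -(g (i+1) - g i) by ring, abs_neg]
      exact h1 i
    · intro i j
      show |i - j| ≤ K * (|(-g i) - (-g j)| + B)
      rw [show (-g i) - (-g j) = -(g i - g j) by ring, abs_neg]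
      exact h2 i j
    · intro A
      obtain ⟨N, hN⟩ := hmP (-A)
      exact ⟨N, fun i hi => by have := hN i hi; show A ≤ -g i; omega⟩
    · intro A
      obtain ⟨N, hN⟩ := hmM (-A)
      refine ⟨-N, fun i hi => ?_⟩
      have := hN (-i) (by omega)
      simp only [neg_neg] at this
      show A ≤ -g i
      omega
end

section
/- Let X be a connected, locally finite simple graph with vertex set V and graph distance d, and suppose there exist real constants α ≥ 1, β ≥ 0, γ ≥ 0 and a map f : V → ℤ with (i) α⁻¹·d(u,v) − β ≤ |f(u) − f(v)| ≤ α·d(u,v) + β for all u, v ∈ V, and (ii) for every n ∈ ℤ there exists x ∈ V with |f(x) − n| ≤ γ. Then for every i ∈ ℕ there exists a vertex x ∈ V with 0 ≤ f(x) ≤ α + β that is the midpoint of a geodesic of length 2i, i.e., there is a map p : {j ∈ ℤ : |j| ≤ i} → V with p(0) = x and d(p(j), p(k)) = |j − k| for all j, k with |j|, |k| ≤ i. -/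
private lemma walk_dist_getVert_le {V : Type*} {X : SimpleGraph V} (hconn : X.Connected)
    {a b : V} (w : X.Walk a b) (s : ℕ) : ∀ k : ℕ,
    X.dist (w.getVert s) (w.getVert (s + k)) ≤ k := by
  intro k
  induction k with
  | zero => simp [SimpleGraph.dist_self]
  | succ k ih =>
    by_cases h : s + k < w.length
    · have hadj := w.adj_getVert_succ h
      have h1 : X.dist (w.getVert (s + k)) (w.getVert (s + k + 1)) ≤ 1 :=
        SimpleGraph.dist_le (hadj.toWalk)
      calc X.dist (w.getVert s) (w.getVert (s + (k + 1)))
          ≤ X.dist (w.getVert s) (w.getVert (s + k)) +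
            X.dist (w.getVert (s + k)) (w.getVert (s + (k + 1))) := hconn.dist_triangle
        _ ≤ k + 1 := by
            rw [show s + (k + 1) = s + k + 1 from rfl]
            omega
    · have h1 : w.getVert (s + k) = b := w.getVert_of_length_le (by omega)
      have h2 : w.getVert (s + (k + 1)) = b := w.getVert_of_length_le (by omega)
      rw [h2]
      have := h1 ▸ ih
      omega

private lemma geodesic_dist_getVert {V : Type*} {X : SimpleGraph V} (hconn : X.Connected)
    {a b : V} (w : X.Walk a b) (hgeo : w.length = X.dist a b) {s t : ℕ}
    (hst : s ≤ t) (ht : t ≤ w.length) :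
    X.dist (w.getVert s) (w.getVert t) = t - s := by
  have hle : X.dist (w.getVert s) (w.getVert t) ≤ t - s := by
    have := walk_dist_getVert_le hconn w s (t - s)
    rwa [show s + (t - s) = t by omega] at this
  have h1 : X.dist a (w.getVert s) ≤ s := by
    have := walk_dist_getVert_le hconn w 0 s
    simpa [w.getVert_zero] using this
  have h2 : X.dist (w.getVert t) b ≤ w.length - t := by
    have := walk_dist_getVert_le hconn w t (w.length - t)
    rwa [show t + (w.length - t) = w.length by omega, w.getVert_length] at this
  have t1 : X.dist a b ≤ X.dist a (w.getVert t) + X.dist (w.getVert t) b :=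
    hconn.dist_triangle
  have t2 : X.dist a (w.getVert t) ≤ X.dist a (w.getVert s) +
      X.dist (w.getVert s) (w.getVert t) := hconn.dist_triangle
  omega

/-- In a connected, locally finite simple graph quasi-isometric to ℤ,
for every `i ∈ ℕ` there is a vertex `x` with `0 ≤ f x ≤ α + β` that is the midpoint
of a geodesic of length `2i`. -/
theorem exists_midpoint_of_long_geodesic_in_strip {V : Type*} (X : SimpleGraph V)
    (hconn : X.Connected) (hlf : ∀ v : V, (X.neighborSet v).Finite)
    (α β γ : ℝ) (hα : 1 ≤ α) (hβ : 0 ≤ β) (hγ : 0 ≤ γ) (f : V → ℤ)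
    (hf1 : ∀ u v : V, α⁻¹ * (X.dist u v : ℝ) - β ≤ (|f u - f v| : ℝ) ∧
        (|f u - f v| : ℝ) ≤ α * (X.dist u v : ℝ) + β)
    (hf2 : ∀ n : ℤ, ∃ x : V, (|f x - n| : ℝ) ≤ γ)
    (i : ℕ) :
    ∃ x : V, 0 ≤ f x ∧ (f x : ℝ) ≤ α + β ∧
      ∃ p : ℤ → V, p 0 = x ∧
        ∀ j k : ℤ, |j| ≤ (i : ℤ) → |k| ≤ (i : ℤ) → (X.dist (p j) (p k) : ℤ) = |j - k| := by
  have hα0 : (0 : ℝ) < α := lt_of_lt_of_le one_pos hα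
  -- choose a large threshold M
  set M : ℤ := ⌈α * (i : ℝ) + α + 2 * β + γ⌉ + 1 with hM
  have hMR : α * (i : ℝ) + α + 2 * β + γ + 1 ≤ (M : ℝ) := by
    have := Int.le_ceil (α * (i : ℝ) + α + 2 * β + γ)
    push_cast [hM]
    linarith
  have hMpos : (γ : ℝ) < (M : ℝ) := by
    have : (0:ℝ) ≤ α * (i : ℝ) := by positivity
    linarith
  obtain ⟨a, ha⟩ := hf2 (-M)
  obtain ⟨b, hb⟩ := hf2 M
  -- bounds on f a, f b
  have hfa : (f a : ℝ) ≤ γ - M := by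
    have := abs_le.mp ha
    push_cast at this ⊢
    linarith [this.2]
  have hfb : (M : ℝ) - γ ≤ (f b : ℝ) := by
    have := abs_le.mp hb
    push_cast at this ⊢
    linarith [this.1]
  have hfa0 : f a < 0 := by
    have : (f a : ℝ) < 0 := by linarith
    exact_mod_cast this
  have hfb0 : 0 ≤ f b := by
    have : (0:ℝ) ≤ (f b : ℝ) := by linarith
    exact_mod_cast this
  obtain ⟨w, hw⟩ := hconn.exists_walk_length_eq_dist a b
  -- least index with f ≥ 0
  have hP : ∃ m : ℕ, 0 ≤ f (w.getVert m) := ⟨w.length, by rw [w.getVert_length]; exact hfb0⟩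
  classical
  set m := Nat.find hP with hm
  have hPm : 0 ≤ f (w.getVert m) := Nat.find_spec hP
  have hmle : m ≤ w.length := Nat.find_le (by rw [w.getVert_length]; exact hfb0)
  have hm0 : m ≠ 0 := by
    intro h
    have := hPm
    rw [h, w.getVert_zero] at this
    omega
  have hprev : ¬ 0 ≤ f (w.getVert (m - 1)) := Nat.find_min hP (by omega)
  set x := w.getVert m with hx
  -- f x ≤ α + β via adjacency
  have hadj : X.Adj (w.getVert (m - 1)) (w.getVert m) := by
    have := w.adj_getVert_succ (i := m - 1) (by omega)
    rwa [show m - 1 + 1 = m by omega] at this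
  have hdist1 : X.dist (w.getVert (m - 1)) (w.getVert m) = 1 := by
    have hle := SimpleGraph.dist_le hadj.toWalk
    have hne : w.getVert (m-1) ≠ w.getVert m := hadj.ne
    have hpos := hconn.pos_dist_of_ne hne
    simp only [SimpleGraph.Walk.length_cons, SimpleGraph.Walk.length_nil] at hle
    omega
  have hfx : (f x : ℝ) ≤ α + β := by
    have h2 := (hf1 (w.getVert (m - 1)) (w.getVert m)).2
    rw [hdist1] at h2
    have h3 : (|f (w.getVert (m-1)) - f x| : ℝ) ≤ α + β := by
      push_cast at h2 ⊢
      linarith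
    have h4 : (f x : ℝ) - (f (w.getVert (m-1)) : ℝ) ≤ α + β := by
      have := abs_le.mp h3
      push_cast at this ⊢
      linarith [this.1]
    have h5 : (f (w.getVert (m-1)) : ℝ) ≤ -1 := by
      have : f (w.getVert (m-1)) ≤ -1 := by omega
      exact_mod_cast this
    linarith
  -- lower bound on distances from x to endpoints
  have hfx0 : (0 : ℝ) ≤ (f x : ℝ) := by exact_mod_cast hPm
  have hdax : (i : ℕ) ≤ X.dist a x := by
    have h2 := (hf1 a x).2
    have habs : (M : ℝ) - γ ≤ (|f a - f x| : ℝ) := by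
      have : (f a : ℝ) - (f x : ℝ) ≤ -((M:ℝ) - γ) := by linarith
      have h6 : (M:ℝ) - γ ≤ |(f a : ℝ) - (f x : ℝ)| := by
        rw [abs_sub_comm]
        calc (M:ℝ) - γ ≤ (f x : ℝ) - (f a : ℝ) := by linarith
          _ ≤ |(f x : ℝ) - (f a : ℝ)| := le_abs_self _
      push_cast
      exact h6
    have : α * (i : ℝ) ≤ α * (X.dist a x : ℝ) := by linarith
    have hcast : (i : ℝ) ≤ (X.dist a x : ℝ) := le_of_mul_le_mul_left this hα0
    exact_mod_cast hcast
  have hdxb : (i : ℕ) ≤ X.dist x b := by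
    have h2 := (hf1 x b).2
    have habs : (M : ℝ) - γ - α - β ≤ (|f x - f b| : ℝ) := by
      have h6 : (M:ℝ) - γ - α - β ≤ |(f x : ℝ) - (f b : ℝ)| := by
        rw [abs_sub_comm]
        calc (M:ℝ) - γ - α - β ≤ (f b : ℝ) - (f x : ℝ) := by linarith
          _ ≤ |(f b : ℝ) - (f x : ℝ)| := le_abs_self _
      push_cast
      exact h6
    have : α * (i : ℝ) ≤ α * (X.dist x b : ℝ) := by linarith
    have hcast : (i : ℝ) ≤ (X.dist x b : ℝ) := le_of_mul_le_mul_left this hα0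
    exact_mod_cast hcast
  -- m ≥ i and length - m ≥ i
  have hdax_le : X.dist a x ≤ m := by
    have := walk_dist_getVert_le hconn w 0 m
    simpa [w.getVert_zero] using this
  have hdxb_le : X.dist x b ≤ w.length - m := by
    have := walk_dist_getVert_le hconn w m (w.length - m)
    rwa [show m + (w.length - m) = w.length by omega, w.getVert_length] at this
  have him : (i : ℕ) ≤ m := le_trans hdax hdax_le
  have hil : m + i ≤ w.length := by omega
  -- define p
  refine ⟨x, hPm, hfx, fun j => w.getVert ((m : ℤ) + j).toNat, by simp [hx], ?_⟩
  have key : ∀ j k : ℤ, |j| ≤ (i : ℤ) → |k| ≤ (i : ℤ) → j ≤ k →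
      (X.dist (w.getVert ((m : ℤ) + j).toNat) (w.getVert ((m : ℤ) + k).toNat) : ℤ) = |j - k| := by
    intro j k hj hk hjk
    have hj' := abs_le.mp hj
    have hk' := abs_le.mp hk
    set s := ((m : ℤ) + j).toNat with hs
    set t := ((m : ℤ) + k).toNat with ht
    have hsZ : (s : ℤ) = (m : ℤ) + j := Int.toNat_of_nonneg (by omega)
    have htZ : (t : ℤ) = (m : ℤ) + k := Int.toNat_of_nonneg (by omega)
    have hst : s ≤ t := by omega
    have htlen : t ≤ w.length := by omega
    have := geodesic_dist_getVert hconn w hw hst htlen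
    rw [this]
    have : ((t - s : ℕ) : ℤ) = (t : ℤ) - (s : ℤ) := by omega
    rw [this, hsZ, htZ]
    rw [abs_of_nonpos (by omega)]
    ring
  intro j k hj hk
  rcases le_total j k with h | h
  · exact key j k hj hk h
  · rw [SimpleGraph.dist_comm, abs_sub_comm]
    exact key k j hk hj h
end

section
/- Let G be a group generated by a finite symmetric subset S, acting by homeomorphisms on a compact Hausdorff topological space Σ, and assume the action is minimal (every orbit is dense). Let q ∈ Σ, let n ∈ ℕ, and let F be a finite set of maps Σ → Σ such that for each φ ∈ F there exist a finite partition of Σ into open sets and, for each piece, an element of G whose action agrees with φ on that piece. Then there exists r ∈ ℕ such that for every y in the orbit G•q there exists z ∈ Σ with: z = w•y for some w ∈ G that is a product of at most r elements of S, and for every φ ∈ F and every v ∈ G that is a product of at most n elements of S, there exists g ∈ G with φ(v•q) = g•(v•q) and φ(v•z) = g•(v•z). -/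
/-- `wordLenLE S r w` means the group element `w` is a product of at most `r`
elements of `S`. -/
def wordLenLE {G : Type*} [Group G] (S : Finset G) (r : ℕ) (w : G) : Prop :=
  ∃ l : List G, (∀ s ∈ l, s ∈ S) ∧ l.length ≤ r ∧ l.prod = w

/-- ubiquity of patterns in a minimal action. For a minimal action of a
finitely generated group `G = ⟨S⟩` on a compact Hausdorff space `Ω`, a point `q`, a
radius `n` and a finite family `F` of maps that are piecewise given by elements of `G`
on a finite open partition, there is an `r` such that every point `y` of the orbit of
`q` has a point `z` within distance `r` (in the word metric along the orbit) on whose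
`S^n`-neighborhood all maps of `F` act exactly as on the `S^n`-neighborhood of `q`. -/
theorem ubiquitous_patterns {G : Type*} [Group G] {Ω : Type*} [TopologicalSpace Ω]
    [CompactSpace Ω] [T2Space Ω] [MulAction G Ω]
    (hcont : ∀ g : G, Continuous (fun x : Ω => g • x))
    (S : Finset G) (hsym : ∀ s ∈ S, s⁻¹ ∈ S)
    (hgen : Subgroup.closure (S : Set G) = ⊤)
    (hmin : ∀ x : Ω, Dense (MulAction.orbit G x))
    (q : Ω) (n : ℕ) (F : Finset (Ω → Ω))
    (hF : ∀ φ ∈ F, ∃ P : Finset (Set Ω), (∀ U ∈ P, IsOpen U) ∧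
        ⋃₀ (P : Set (Set Ω)) = Set.univ ∧
        ((P : Set (Set Ω)).PairwiseDisjoint id) ∧
        ∀ U ∈ P, ∃ g : G, ∀ x ∈ U, φ x = g • x) :
    ∃ r : ℕ, ∀ y ∈ MulAction.orbit G q, ∃ z : Ω,
      (∃ w : G, wordLenLE S r w ∧ z = w • y) ∧
      ∀ φ ∈ F, ∀ v : G, wordLenLE S n v →
        ∃ g : G, φ (v • q) = g • (v • q) ∧ φ (v • z) = g • (v • z) := by
  classical
  -- every group element has some word length
  have hword : ∀ g : G, ∃ m : ℕ, wordLenLE S m g := by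
    intro g
    have hg : g ∈ Subgroup.closure (S : Set G) := hgen ▸ Subgroup.mem_top g
    have : ∃ l : List G, (∀ s ∈ l, s ∈ S) ∧ l.prod = g := by
      refine Subgroup.closure_induction ?_ ?_ ?_ ?_ hg
      · intro x hx; exact ⟨[x], by simpa using hx, by simp⟩
      · exact ⟨[], by simp, by simp⟩
      · rintro x y _ _ ⟨l1, h1, p1⟩ ⟨l2, h2, p2⟩
        refine ⟨l1 ++ l2, ?_, by simp [p1, p2]⟩
        intro s hs
        rcases List.mem_append.1 hs with h | h
        exacts [h1 s h, h2 s h]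
      · rintro x _ ⟨l, h1, p1⟩
        refine ⟨(l.map fun t => t⁻¹).reverse, ?_, ?_⟩
        · intro s hs
          simp only [List.mem_reverse, List.mem_map] at hs
          obtain ⟨t, ht, rfl⟩ := hs
          exact hsym t (h1 t ht)
        · rw [← List.prod_inv_reverse, p1]
    obtain ⟨l, h1, p1⟩ := this
    exact ⟨l.length, l, h1, le_refl _, p1⟩
  -- the ball of radius n is finite
  have hVfin : {v : G | wordLenLE S n v}.Finite := by
    have hsub : {v : G | wordLenLE S n v} ⊆
        (fun l : List S => (l.map (↑·)).prod) '' {l : List S | l.length ≤ n} := by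
      rintro v ⟨l, hl, hlen, hprod⟩
      refine ⟨l.pmap (fun s h => (⟨s, h⟩ : S)) hl, by simpa using hlen, ?_⟩
      simp only [List.map_pmap]
      rw [List.pmap_eq_map]
      simp [hprod]
    exact (Set.Finite.image _ (List.finite_length_le S n)).subset hsub
  -- choose open pieces around the points v • q
  have key : ∀ φ : Ω → Ω, ∀ v : G, ∃ U : Set Ω, ∃ g : G,
      IsOpen U ∧ v • q ∈ U ∧ (φ ∈ F → ∀ x ∈ U, φ x = g • x) := by
    intro φ v
    by_cases hφ : φ ∈ F
    · obtain ⟨P, hPopen, hPcover, _, hPg⟩ := hF φ hφ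
      have : v • q ∈ ⋃₀ (P : Set (Set Ω)) := hPcover ▸ Set.mem_univ _
      obtain ⟨U, hU, hx⟩ := this
      obtain ⟨g, hg⟩ := hPg U hU
      exact ⟨U, g, hPopen U hU, hx, fun _ => hg⟩
    · exact ⟨Set.univ, 1, isOpen_univ, Set.mem_univ _, fun h => absurd h hφ⟩
  choose U g hUopen hUmem hUg using key
  set W : Set Ω := ⋂ φ ∈ F, ⋂ v ∈ {v : G | wordLenLE S n v},
    (fun x => v • x) ⁻¹' U φ v with hW
  have hWopen : IsOpen W := by
    refine isOpen_biInter_finset fun φ _ => ?_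
    exact hVfin.isOpen_biInter fun v _ => (hUopen φ v).preimage (hcont v)
  have hqW : q ∈ W := by
    refine Set.mem_iInter₂.2 fun φ _ => Set.mem_iInter₂.2 fun v _ => ?_
    exact hUmem φ v
  -- cover by translates of W, finite subcover
  have hcover : (Set.univ : Set Ω) ⊆ ⋃ g : G, (fun x => g • x) ⁻¹' W := by
    intro x _
    obtain ⟨p, hp, hpW⟩ := (hmin x).exists_mem_open hWopen ⟨q, hqW⟩
    obtain ⟨g0, rfl⟩ := hp
    exact Set.mem_iUnion.2 ⟨g0, hpW⟩
  obtain ⟨T, hT⟩ := isCompact_univ.elim_finite_subcover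
    (fun g : G => (fun x => g • x) ⁻¹' W) (fun g => hWopen.preimage (hcont g)) hcover
  choose m hm using hword
  refine ⟨T.sup m, fun y _ => ?_⟩
  obtain ⟨w, hwT, hwy⟩ : ∃ w ∈ T, w • y ∈ W := by
    have := hT (Set.mem_univ y)
    simpa using this
  refine ⟨w • y, ⟨w, ?_, rfl⟩, ?_⟩
  · obtain ⟨l, h1, h2, h3⟩ := hm w
    exact ⟨l, h1, h2.trans (Finset.le_sup hwT), h3⟩
  · intro φ hφ v hv
    have hzU : v • (w • y) ∈ U φ v := by
      have := Set.mem_iInter₂.1 (Set.mem_iInter₂.1 hwy φ hφ) v hv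
      exact this
    exact ⟨g φ v, hUg φ v hφ _ (hUmem φ v), hUg φ v hφ _ hzU⟩
end
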